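/- Let $k < n$ be integers and let $h \in L_p(\mathbb{R}^d)$ with $h \ge 0$, $1 \le p \le \infty$. With $M_{k,n}$ as above and $h_n = \mathsf{E}_n h$ the conditional expectation of $h$ onto the $\sigma$-algebra generated by dyadic cubes of side length $2^{-n}$, one has $\|M_{k,n} h\|_p \le C_d \, 2^{k-n} \|h_n\|_p$. -/

import Mathlib

open MeasureTheory Metric
open scoped ENNReal

noncomputable section

/-- Euclidean space `ℝ^d`. -/
abbrev Euc (d : ℕ) := EuclideanSpace ℝ (Fin d)

/-- The standard dyadic cube at scale `n` (side length `2^{-n}`) indexed by `m`. -/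
def dyadicCube (d : ℕ) (n : ℤ) (m : Fin d → ℤ) : Set (Euc d) :=
  {y | ∀ j, (m j : ℝ) * 2 ^ (-n) ≤ y j ∧ y j < ((m j : ℝ) + 1) * 2 ^ (-n)}

/-- Index of the dyadic cube at scale `n` containing `x`. -/
def dyadicIdx (d : ℕ) (n : ℤ) (x : Euc d) : Fin d → ℤ :=
  fun j => ⌊(2 : ℝ) ^ n * x j⌋

/-- Dyadic conditional expectation at scale `2^{-n}`. -/
def Ek (d : ℕ) (n : ℤ) (h : Euc d → ℝ) (x : Euc d) : ℝ :=
  (2 : ℝ) ^ (n * d) * ∫ y in dyadicCube d n (dyadicIdx d n x), h y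

/-- Average over the Euclidean ball of radius `2^{-k}` centered at `x`. -/
def Mk (d : ℕ) (k : ℤ) (h : Euc d → ℝ) (x : Euc d) : ℝ :=
  ((volume (ball (0 : Euc d) ((2 : ℝ) ^ (-k)))).toReal)⁻¹ *
    ∫ y in ball x ((2 : ℝ) ^ (-k)), h y

/-- Indices of dyadic cubes at scale `n` meeting the boundary of the ball `B(x, 2^{-k})`. -/
def bdryIdx (d : ℕ) (k n : ℤ) (x : Euc d) : Set (Fin d → ℤ) :=
  {m | (dyadicCube d n m ∩ frontier (ball x ((2 : ℝ) ^ (-k)))).Nonempty}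

/-- `𝓘(B_k + x, n)`: union over boundary cubes `Q` at scale `n` of `Q ∩ B(x,2^{-k})`. -/
def Ikn (d : ℕ) (k n : ℤ) (x : Euc d) : Set (Euc d) :=
  ⋃ m ∈ bdryIdx d k n x, dyadicCube d n m ∩ ball x ((2 : ℝ) ^ (-k))

/-- The operator `M_{k,n}`. -/
def Mkn (d : ℕ) (k n : ℤ) (h : Euc d → ℝ) (x : Euc d) : ℝ :=
  ((volume (ball (0 : Euc d) ((2 : ℝ) ^ (-k)))).toReal)⁻¹ * ∫ y in Ikn d k n x, h y

/-- The concentric dilation `iQ` of the dyadic cube at scale `n` indexed by `m`. -/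
def cubeDil (d : ℕ) (i : ℕ) (n : ℤ) (m : Fin d → ℤ) : Set (Euc d) :=
  {y | ∀ j, ((m j : ℝ) + 1 / 2) * 2 ^ (-n) - (i : ℝ) * 2 ^ (-n) / 2 ≤ y j ∧
      y j < ((m j : ℝ) + 1 / 2) * 2 ^ (-n) + (i : ℝ) * 2 ^ (-n) / 2}

/-!
Positivity lets one replace `𝓘(B_k + x, n)` by the full union of the dyadic cubes meeting the
sphere `∂B(x, 2^{-k})`. On each such cube `h` and `𝖤_n h` have the same integral, and all these
cubes lie in the annulus `x + A` of width `2√d 2^{-n}` around the sphere, so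
`M_{k,n} h(x) ≤ |B_k|⁻¹ ∫_A 𝖤_n h(x + z) dz`. Averaging translates over `A` is bounded on `L^p`
with norm `|A|` (Jensen on `A`, then Tonelli and translation invariance), and
`|A| ≤ C_d 2^{k-n} |B_k|` since the annulus has width `≈ 2^{-n}` and radius `2^{-k}`.
-/

theorem lintegral_rpow_le_measure_univ_rpow_mul {α : Type*} [MeasurableSpace α] (ν : Measure α)
    {u : α → ℝ≥0∞} (hu : AEMeasurable u ν) {q : ℝ} (hq : 1 ≤ q) :
    (∫⁻ z, u z ∂ν) ^ q ≤ ν Set.univ ^ (q - 1) * ∫⁻ z, u z ^ q ∂ν := by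
  have hq0 : 0 < q := by linarith
  have key := eLpNorm_le_eLpNorm_mul_rpow_measure_univ (p := 1) (q := ENNReal.ofReal q)
    (by simpa using hq) hu.aestronglyMeasurable
  rw [eLpNorm_one_eq_lintegral_enorm, eLpNorm_eq_lintegral_rpow_enorm_toReal (by simp; linarith)
    (by simp), ENNReal.toReal_ofReal hq0.le] at key
  simp only [enorm_eq_self, ENNReal.toReal_one] at key
  calc (∫⁻ z, u z ∂ν) ^ q
      ≤ ((∫⁻ z, u z ^ q ∂ν) ^ (1 / q) * ν Set.univ ^ (1 / 1 - 1 / q)) ^ q := by gcongr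
    _ = ν Set.univ ^ (q - 1) * ∫⁻ z, u z ^ q ∂ν := by
      rw [ENNReal.mul_rpow_of_nonneg _ _ hq0.le, ← ENNReal.rpow_mul, ← ENNReal.rpow_mul,
        one_div_mul_cancel hq0.ne', ENNReal.rpow_one, mul_comm]
      congr 2
      field_simp

section Translation

variable {G : Type*} [MeasurableSpace G] [AddCommGroup G] [MeasurableAdd₂ G] {μ : Measure G}
  [μ.IsAddLeftInvariant] {g : G → ℝ≥0∞} {A : Set G}

theorem setLIntegral_add_le_essSup_mul (x : G) :
    ∫⁻ z in A, g (x + z) ∂μ ≤ essSup g μ * μ A := by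
  have hae : ∀ᵐ z ∂μ, g (x + z) ≤ essSup g μ :=
    (measurePreserving_add_left μ x).quasiMeasurePreserving.ae (ENNReal.ae_le_essSup g)
  calc ∫⁻ z in A, g (x + z) ∂μ ≤ ∫⁻ _ in A, essSup g μ ∂μ :=
        lintegral_mono_ae (ae_restrict_of_ae hae)
    _ = essSup g μ * μ A := setLIntegral_const _ _

theorem lintegral_setLIntegral_add_rpow_le [SFinite μ] (hg : Measurable g) (hA : μ A ≠ ∞)
    {q : ℝ} (hq : 1 ≤ q) :
    ∫⁻ x, (∫⁻ z in A, g (x + z) ∂μ) ^ q ∂μ ≤ μ A ^ q * ∫⁻ x, g x ^ q ∂μ := by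
  have hq0 : 0 ≤ q - 1 := by linarith
  calc ∫⁻ x, (∫⁻ z in A, g (x + z) ∂μ) ^ q ∂μ
      ≤ ∫⁻ x, μ A ^ (q - 1) * ∫⁻ z in A, g (x + z) ^ q ∂μ ∂μ := by
        refine lintegral_mono fun x => ?_
        simpa using lintegral_rpow_le_measure_univ_rpow_mul (μ.restrict A)
          (hg.comp (measurable_const_add x)).aemeasurable hq
    _ = μ A ^ (q - 1) * ∫⁻ z in A, ∫⁻ x, g (x + z) ^ q ∂μ ∂μ := by
        rw [lintegral_const_mul' _ _ (ENNReal.rpow_ne_top_of_nonneg hq0 hA),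
          lintegral_lintegral_swap ((hg.comp measurable_add).pow_const _).aemeasurable]
    _ = μ A ^ q * ∫⁻ x, g x ^ q ∂μ := by
        simp_rw [lintegral_add_right_eq_self (fun x => g x ^ q), setLIntegral_const]
        have hsplit : μ A ^ q = μ A ^ (q - 1) * μ A := by
          simpa using ENNReal.rpow_add_of_nonneg (x := μ A) _ _ hq0 zero_le_one
        rw [hsplit]
        ring

theorem eLpNorm_setLIntegral_add_le [SFinite μ] (hg : Measurable g) (hA : μ A ≠ ∞)
    {p : ℝ≥0∞} (hp : 1 ≤ p) :
    eLpNorm (fun x => ∫⁻ z in A, g (x + z) ∂μ) p μ ≤ μ A * eLpNorm g p μ := by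
  rcases eq_or_ne p ∞ with rfl | hp_top
  · simp only [eLpNorm_exponent_top, eLpNormEssSup, enorm_eq_self]
    refine essSup_le_of_ae_le _ (.of_forall fun x => ?_)
    rw [mul_comm]
    exact setLIntegral_add_le_essSup_mul x
  have hp0 : p ≠ 0 := (zero_lt_one.trans_le hp).ne'
  have hq : 1 ≤ p.toReal := by
    simpa using ENNReal.toReal_mono hp_top hp
  have hq0 : 0 < p.toReal := by linarith
  simp only [eLpNorm_eq_lintegral_rpow_enorm_toReal hp0 hp_top, enorm_eq_self]
  calc (∫⁻ x, (∫⁻ z in A, g (x + z) ∂μ) ^ p.toReal ∂μ) ^ (1 / p.toReal)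
      ≤ (μ A ^ p.toReal * ∫⁻ x, g x ^ p.toReal ∂μ) ^ (1 / p.toReal) := by
        gcongr
        exact lintegral_setLIntegral_add_rpow_le hg hA hq
    _ = μ A * (∫⁻ x, g x ^ p.toReal ∂μ) ^ (1 / p.toReal) := by
        rw [ENNReal.mul_rpow_of_nonneg _ _ (by positivity), ← ENNReal.rpow_mul,
          mul_one_div_cancel hq0.ne', ENNReal.rpow_one]

end Translation

theorem subset_closedBall_diff_ball_of_dist_le {X : Type*} [PseudoMetricSpace X] {Q : Set X}
    {x : X} {r s : ℝ} (hQ : ∀ y ∈ Q, ∀ z ∈ Q, dist y z ≤ s)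
    (hfr : (Q ∩ frontier (ball x r)).Nonempty) :
    Q ⊆ closedBall x (r + s) \ ball x (r - s) := by
  obtain ⟨z, hzQ, hz⟩ := hfr
  have hzx : dist z x = r := mem_sphere.1 (frontier_ball_subset_sphere hz)
  intro y hy
  have hyz := hQ y hy z hzQ
  have hzy := hQ z hzQ y hy
  exact ⟨mem_closedBall.2 (by linarith [dist_triangle y z x]),
    fun hyx => by linarith [mem_ball.1 hyx, dist_triangle z y x]⟩

open Module in
theorem addHaar_closedBall_diff_ball_le {E : Type*} [NormedAddCommGroup E]
    [NormedSpace ℝ E] [MeasurableSpace E] [BorelSpace E] [FiniteDimensional ℝ E] [Nontrivial E]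
    (μ : Measure E) [μ.IsAddHaarMeasure] (x : E) {r s : ℝ} (hr : 0 ≤ r) (hs : 0 ≤ s) :
    μ (closedBall x (r + s) \ ball x (r - s)) ≤
      ENNReal.ofReal (2 * s * finrank ℝ E * (r + s) ^ (finrank ℝ E - 1)) * μ (ball 0 1) := by
  set ρ := max (r - s) 0 with hρ_def
  have hρ : 0 ≤ ρ := le_max_right _ _
  have hρR : ρ ≤ r + s := max_le (by linarith) (by linarith)
  have hball : ball x (r - s) = ball x ρ := by
    rcases le_total 0 (r - s) with h | h
    · rw [hρ_def, max_eq_left h]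
    · rw [hρ_def, max_eq_right h, ball_eq_empty.2 h, ball_eq_empty.2 le_rfl]
  have hpow : (r + s) ^ finrank ℝ E - ρ ^ finrank ℝ E ≤
      2 * s * finrank ℝ E * (r + s) ^ (finrank ℝ E - 1) := by
    have := abs_pow_sub_pow_le (r + s) ρ (finrank ℝ E)
    rw [abs_of_nonneg (sub_nonneg.2 (pow_le_pow_left₀ hρ hρR _)), abs_of_nonneg (by linarith),
      abs_of_nonneg hρ, abs_of_nonneg (by linarith), max_eq_left hρR] at this
    refine this.trans ?_
    gcongr
    linarith [le_max_left (r - s) 0]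
  rw [hball, measure_sdiff ((ball_subset_closedBall).trans (closedBall_subset_closedBall hρR))
    measurableSet_ball.nullMeasurableSet measure_ball_lt_top.ne,
    μ.addHaar_closedBall _ (by linarith), μ.addHaar_ball _ hρ,
    ← ENNReal.sub_mul (fun _ _ => measure_ball_lt_top.ne), ← ENNReal.ofReal_sub _ (by positivity)]
  gcongr

section Dyadic

variable {d : ℕ} {n : ℤ} {m : Fin d → ℤ}

theorem dyadicCube_eq_preimage_pi (d : ℕ) (n : ℤ) (m : Fin d → ℤ) :
    dyadicCube d n m = (MeasurableEquiv.toLp 2 (Fin d → ℝ)).symm ⁻¹'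
      Set.univ.pi fun j => Set.Ico ((m j : ℝ) * 2 ^ (-n)) ((m j + 1) * 2 ^ (-n)) := by
  ext y
  simp [dyadicCube]

theorem measurableSet_dyadicCube (d : ℕ) (n : ℤ) (m : Fin d → ℤ) :
    MeasurableSet (dyadicCube d n m) := by
  rw [dyadicCube_eq_preimage_pi]
  exact MeasurableEquiv.measurableSet_preimage _ |>.2 (.univ_pi fun _ => measurableSet_Ico)

theorem volume_dyadicCube (d : ℕ) (n : ℤ) (m : Fin d → ℤ) :
    volume (dyadicCube d n m) = ENNReal.ofReal ((2 : ℝ) ^ (n * d))⁻¹ := by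
  rw [dyadicCube_eq_preimage_pi,
    (EuclideanSpace.volume_preserving_symm_measurableEquiv_toLp (Fin d)).measure_preimage
      (MeasurableSet.univ_pi fun _ => measurableSet_Ico).nullMeasurableSet,
    volume_pi_pi]
  simp_rw [Real.volume_Ico, ← sub_mul, add_sub_cancel_left, one_mul, Finset.prod_const,
    Finset.card_univ, Fintype.card_fin, ← ENNReal.ofReal_pow (zpow_nonneg zero_le_two _),
    ← zpow_natCast, ← zpow_mul, ← zpow_neg, neg_mul]

theorem dyadicIdx_eq_of_mem {y : Euc d} (hy : y ∈ dyadicCube d n m) : dyadicIdx d n y = m := by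
  funext j
  have h2 : (0 : ℝ) < 2 ^ n := zpow_pos two_pos n
  obtain ⟨hl, hr⟩ := hy j
  rw [zpow_neg, ← div_eq_mul_inv, div_le_iff₀ h2] at hl
  rw [zpow_neg, ← div_eq_mul_inv, lt_div_iff₀ h2] at hr
  refine Int.floor_eq_iff.2 ⟨?_, ?_⟩ <;> linarith

theorem pairwiseDisjoint_dyadicCube (d : ℕ) (n : ℤ) (s : Set (Fin d → ℤ)) :
    s.PairwiseDisjoint (dyadicCube d n) := fun _ _ _ _ hab =>
  Set.disjoint_left.2 fun _ hya hyb => hab <| (dyadicIdx_eq_of_mem hya).symm.trans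
    (dyadicIdx_eq_of_mem hyb)

theorem dist_le_of_mem_dyadicCube {y z : Euc d} (hy : y ∈ dyadicCube d n m)
    (hz : z ∈ dyadicCube d n m) : dist y z ≤ Real.sqrt d * 2 ^ (-n) := by
  have hcoord : ∀ j, dist (y j) (z j) ≤ 2 ^ (-n) := fun j => by
    rw [Real.dist_eq, abs_sub_le_iff]
    constructor <;> linarith [hy j, hz j]
  calc dist y z ≤ Real.sqrt (∑ _j : Fin d, ((2 : ℝ) ^ (-n)) ^ 2) := by
        rw [EuclideanSpace.dist_eq]
        gcongr with j
        exact hcoord j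
    _ = Real.sqrt d * 2 ^ (-n) := by
        simp [Real.sqrt_mul (Nat.cast_nonneg d), Real.sqrt_sq (zpow_nonneg zero_le_two _)]

theorem isBounded_dyadicCube (d : ℕ) (n : ℤ) (m : Fin d → ℤ) :
    Bornology.IsBounded (dyadicCube d n m) :=
  isBounded_iff.2 ⟨_, fun _ hy _ hz => dist_le_of_mem_dyadicCube hy hz⟩

theorem measurable_Ek (d : ℕ) (n : ℤ) (h : Euc d → ℝ) : Measurable (Ek d n h) := by
  change Measurable ((fun m => (2 : ℝ) ^ (n * d) * ∫ y in dyadicCube d n m, h y) ∘ dyadicIdx d n)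
  refine measurable_of_countable _ |>.comp (measurable_pi_lambda _ fun j => ?_)
  exact ((measurable_pi_apply j).comp (WithLp.measurable_ofLp 2 _)).const_mul _ |>.floor

theorem Ek_nonneg {h : Euc d → ℝ} (hh : ∀ x, 0 ≤ h x) (x : Euc d) : 0 ≤ Ek d n h x :=
  mul_nonneg (zpow_nonneg zero_le_two _)
    (setIntegral_nonneg (measurableSet_dyadicCube d n _) fun y _ => hh y)

theorem setLIntegral_dyadicCube_ofReal_Ek {h : Euc d → ℝ}
    (hint : IntegrableOn h (dyadicCube d n m)) (hh : ∀ x, 0 ≤ h x) :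
    ∫⁻ y in dyadicCube d n m, ENNReal.ofReal (Ek d n h y) =
      ∫⁻ y in dyadicCube d n m, ENNReal.ofReal (h y) := by
  have hI : 0 ≤ ∫ y in dyadicCube d n m, h y :=
    setIntegral_nonneg (measurableSet_dyadicCube d n m) fun y _ => hh y
  have hconst : ∀ y ∈ dyadicCube d n m,
      Ek d n h y = (2 : ℝ) ^ (n * d) * ∫ y in dyadicCube d n m, h y := fun y hy => by
    rw [Ek, dyadicIdx_eq_of_mem hy]
  rw [setLIntegral_congr_fun (measurableSet_dyadicCube d n m) fun y hy => by rw [hconst y hy],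
    setLIntegral_const, volume_dyadicCube, ← ENNReal.ofReal_mul (by positivity),
    ← ofReal_integral_eq_lintegral_ofReal hint (.of_forall hh), mul_comm,
    inv_mul_cancel_left₀ (zpow_ne_zero _ two_ne_zero)]

theorem setLIntegral_biUnion_dyadicCube_ofReal_Ek {h : Euc d → ℝ}
    (hint : ∀ m, IntegrableOn h (dyadicCube d n m)) (hh : ∀ x, 0 ≤ h x) (S : Set (Fin d → ℤ)) :
    ∫⁻ y in ⋃ m ∈ S, dyadicCube d n m, ENNReal.ofReal (Ek d n h y) =
      ∫⁻ y in ⋃ m ∈ S, dyadicCube d n m, ENNReal.ofReal (h y) := by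
  simp only [lintegral_biUnion S.to_countable (fun m _ => measurableSet_dyadicCube d n m)
    (pairwiseDisjoint_dyadicCube d n S), setLIntegral_dyadicCube_ofReal_Ek (hint _) hh]

theorem enorm_Mkn_le {k : ℤ} {h : Euc d → ℝ} (hloc : LocallyIntegrable h volume)
    (hh : ∀ x, 0 ≤ h x) (x : Euc d) :
    ‖Mkn d k n h x‖ₑ ≤ (volume (ball (0 : Euc d) (2 ^ (-k))))⁻¹ *
      ∫⁻ z in closedBall 0 (2 ^ (-k) + Real.sqrt d * 2 ^ (-n)) \
        ball 0 (2 ^ (-k) - Real.sqrt d * 2 ^ (-n)), ENNReal.ofReal (Ek d n h (x + z)) := by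
  set r : ℝ := 2 ^ (-k)
  set s : ℝ := Real.sqrt d * 2 ^ (-n)
  have hint : ∀ m, IntegrableOn h (dyadicCube d n m) := fun m =>
    (hloc.integrableOn_isCompact (isBounded_dyadicCube d n m).isCompact_closure).mono_set
      subset_closure
  have hB : volume (ball (0 : Euc d) r) ≠ 0 := (measure_ball_pos _ _ (by positivity)).ne'
  have htranslate : (x + ·) ⁻¹' (closedBall x (r + s) \ ball x (r - s)) =
      closedBall 0 (r + s) \ ball 0 (r - s) := by
    ext z
    simp [dist_eq_norm]
  have hIkn : ∫⁻ y in Ikn d k n x, ENNReal.ofReal (h y) ≤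
      ∫⁻ z in closedBall 0 (r + s) \ ball 0 (r - s), ENNReal.ofReal (Ek d n h (x + z)) :=
    calc ∫⁻ y in Ikn d k n x, ENNReal.ofReal (h y)
        ≤ ∫⁻ y in ⋃ m ∈ bdryIdx d k n x, dyadicCube d n m, ENNReal.ofReal (h y) :=
          lintegral_mono_set (Set.iUnion₂_mono fun _ _ => Set.inter_subset_left)
      _ = ∫⁻ y in ⋃ m ∈ bdryIdx d k n x, dyadicCube d n m, ENNReal.ofReal (Ek d n h y) :=
          (setLIntegral_biUnion_dyadicCube_ofReal_Ek hint hh _).symm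
      _ ≤ ∫⁻ y in closedBall x (r + s) \ ball x (r - s), ENNReal.ofReal (Ek d n h y) :=
          lintegral_mono_set <| Set.iUnion₂_subset fun _ hm =>
            subset_closedBall_diff_ball_of_dist_le
              (fun _ hy _ hz => dist_le_of_mem_dyadicCube hy hz) hm
      _ = _ := by
          rw [← htranslate]
          exact ((measurePreserving_add_left volume x).setLIntegral_comp_preimage_emb
            (MeasurableEquiv.addLeft x).measurableEmbedding _ _).symm
  calc ‖Mkn d k n h x‖ₑ
      = ENNReal.ofReal (volume (ball (0 : Euc d) r)).toReal⁻¹ *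
          ENNReal.ofReal (∫ y in Ikn d k n x, h y) := by
        rw [← ENNReal.ofReal_mul (inv_nonneg.2 ENNReal.toReal_nonneg), Mkn,
          Real.enorm_eq_ofReal (mul_nonneg (inv_nonneg.2 ENNReal.toReal_nonneg)
            (integral_nonneg fun y => hh y))]
    _ ≤ (volume (ball (0 : Euc d) r))⁻¹ * ∫⁻ y in Ikn d k n x, ENNReal.ofReal (h y) := by
        rw [← ENNReal.toReal_inv, ENNReal.ofReal_toReal (ENNReal.inv_ne_top.2 hB),
          integral_eq_lintegral_of_nonneg_ae (.of_forall hh) hloc.aestronglyMeasurable.restrict]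
        exact mul_le_mul_right ENNReal.ofReal_toReal_le _
    _ ≤ _ := mul_le_mul_right hIkn _

end Dyadic

theorem volume_closedBall_diff_ball_le {d : ℕ} (hd : 0 < d) {k n : ℤ} (hkn : k < n) :
    volume (closedBall (0 : Euc d) (2 ^ (-k) + Real.sqrt d * 2 ^ (-n)) \
        ball 0 (2 ^ (-k) - Real.sqrt d * 2 ^ (-n))) ≤
      ENNReal.ofReal (2 * d ^ 2 * (1 + d) ^ (d - 1) * 2 ^ (k - n)) *
        volume (ball (0 : Euc d) (2 ^ (-k))) := by
  have : Nonempty (Fin d) := ⟨⟨0, hd⟩⟩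
  set r : ℝ := 2 ^ (-k)
  set δ : ℝ := 2 ^ (-n)
  have hr : 0 < r := by positivity
  have hδ : δ = 2 ^ (k - n) * r := by
    simp only [δ, r]
    rw [← zpow_add₀ two_ne_zero]
    ring_nf
  have hδr : δ ≤ r := zpow_le_zpow_right₀ one_le_two (by omega)
  have hsqrt : Real.sqrt d ≤ d := by
    have hd1 : (1 : ℝ) ≤ d := by exact_mod_cast hd
    exact Real.sqrt_le_iff.2 ⟨by positivity, by nlinarith⟩
  have hkey : 2 * (Real.sqrt d * δ) * d * (r + Real.sqrt d * δ) ^ (d - 1) ≤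
      2 * d ^ 2 * (1 + d) ^ (d - 1) * 2 ^ (k - n) * r ^ d :=
    calc 2 * (Real.sqrt d * δ) * d * (r + Real.sqrt d * δ) ^ (d - 1)
        ≤ 2 * (d * δ) * d * ((1 + d) * r) ^ (d - 1) := by
          have : Real.sqrt d * δ ≤ d * r := by nlinarith [Real.sqrt_nonneg d]
          gcongr
          linarith
      _ = 2 * d ^ 2 * (1 + d) ^ (d - 1) * 2 ^ (k - n) * (r * r ^ (d - 1)) := by
          rw [hδ, mul_pow]
          ring
      _ = _ := by rw [← pow_succ', Nat.sub_add_cancel hd]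
  refine (addHaar_closedBall_diff_ball_le volume 0 hr.le (by positivity)).trans ?_
  rw [Measure.addHaar_ball _ _ hr.le, finrank_euclideanSpace_fin, ← mul_assoc (ENNReal.ofReal _),
    ← ENNReal.ofReal_mul (by positivity)]
  exact mul_le_mul_left (ENNReal.ofReal_le_ofReal hkey) _

/-- For nonnegative `h`, `‖M_{k,n} h‖_p ≤ C_d 2^{k-n} ‖𝖤_n h‖_p`. -/
theorem Mkn_Lp_bound_pos (d : ℕ) (hd : 0 < d) :
    ∃ C : ℝ, 0 < C ∧ ∀ (k n : ℤ), k < n → ∀ (p : ℝ≥0∞), 1 ≤ p →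
      ∀ h : Euc d → ℝ, MemLp h p volume → (∀ x, 0 ≤ h x) →
        eLpNorm (Mkn d k n h) p volume ≤
          ENNReal.ofReal (C * 2 ^ (k - n)) * eLpNorm (Ek d n h) p volume := by
  refine ⟨2 * d ^ 2 * (1 + d) ^ (d - 1), by positivity, fun k n hkn p hp h hmem hh => ?_⟩
  set B := volume (ball (0 : Euc d) (2 ^ (-k)))
  set A := closedBall (0 : Euc d) (2 ^ (-k) + Real.sqrt d * 2 ^ (-n)) \
    ball 0 (2 ^ (-k) - Real.sqrt d * 2 ^ (-n))
  have hB : B⁻¹ ≠ ∞ := ENNReal.inv_ne_top.2 (measure_ball_pos _ _ (by positivity)).ne'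
  have hA : volume A ≠ ∞ :=
    (measure_mono Set.sdiff_subset |>.trans_lt measure_closedBall_lt_top).ne
  have hMkn : ∀ x, ‖Mkn d k n h x‖ₑ ≤
      B⁻¹.toNNReal * ‖∫⁻ z in A, ENNReal.ofReal (Ek d n h (x + z))‖ₑ := fun x => by
    rw [enorm_eq_self, ENNReal.coe_toNNReal hB]
    exact enorm_Mkn_le (hmem.locallyIntegrable hp) hh x
  calc eLpNorm (Mkn d k n h) p volume
      ≤ B⁻¹ * eLpNorm (fun x => ∫⁻ z in A, ENNReal.ofReal (Ek d n h (x + z))) p volume := by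
        have := eLpNorm_le_nnreal_smul_eLpNorm_of_ae_le_mul' (μ := volume) (.of_forall hMkn) p
        rwa [ENNReal.smul_def, smul_eq_mul, ENNReal.coe_toNNReal hB] at this
    _ ≤ B⁻¹ * (volume A * eLpNorm (fun y => ENNReal.ofReal (Ek d n h y)) p volume) := by
        gcongr
        exact eLpNorm_setLIntegral_add_le (measurable_Ek d n h).ennreal_ofReal hA hp
    _ = volume A / B * eLpNorm (Ek d n h) p volume := by
        rw [← mul_assoc, ENNReal.div_eq_inv_mul]
        congr 1
        exact eLpNorm_congr_enorm_ae (.of_forall fun y => by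
          rw [enorm_eq_self, Real.enorm_eq_ofReal (Ek_nonneg hh y)])
    _ ≤ ENNReal.ofReal (2 * d ^ 2 * (1 + d) ^ (d - 1) * 2 ^ (k - n)) *
          eLpNorm (Ek d n h) p volume := by
        gcongr
        exact ENNReal.div_le_of_le_mul (volume_closedBall_diff_ball_le hd hkn)
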